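/- arXiv:1511.07942 — 3 statements merged into one kernel-verified Lean document; each statement's English description precedes it below -/
import Mathlib

section
/- Let q be a prime power, d a positive integer with q > d, and let A be a nonempty finite family of monic polynomials of degree d over F_q. For a subset X of F_q, let S_X^A denote the set of polynomials f + a_0 with f in A and a_0 in F_q that vanish at every point of X. Then the average value set V(A) := (1/|A|) * sum over f in A of |{f(c) : c in F_q}| satisfies V(A) = (1/|A|) * sum over r from 1 to d of (-1)^{r-1} * sum over all r-element subsets X_r of F_q of |S_{X_r}^A|. -/
/-!
A value `c` is taken by `f` exactly when `f - c` has a root, so `∑_{f ∈ A} V(f)` counts the pairs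
`(f, a₀)` for which `f + a₀` has a root in `F_q`. These pairs form the union over `x ∈ F_q` of the
sets `S_{{x}}^A`, whose intersections are the `S_X^A`; inclusion–exclusion gives the alternating
sum, and it stops at `r = d` because `f + a₀` is nonzero of degree `d`, hence has at most `d` roots.
-/

open Finset Polynomial

namespace Finset

theorem card_filter_exists_eq_sum_powerset {ι α : Type*} (P : Finset α) (s : Finset ι)
    (q : ι → α → Prop) [∀ i, DecidablePred (q i)] :
    (#(P.filter fun a => ∃ i ∈ s, q i a) : ℤ) =
      ∑ t ∈ s.powerset with t.Nonempty,
        (-1 : ℤ) ^ (#t + 1) * #(P.filter fun a => ∀ i ∈ t, q i a) := by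
  classical
  have hunion : (P.filter fun a => ∃ i ∈ s, q i a) = s.biUnion fun i => P.filter (q i) := by
    ext a
    simp only [mem_filter, mem_biUnion]
    tauto
  have hinter (t : Finset ι) (ht : t.Nonempty) :
      t.inf' ht (fun i => P.filter (q i)) = P.filter fun a => ∀ i ∈ t, q i a := by
    ext a
    simp only [mem_inf', mem_filter]
    obtain ⟨i, hi⟩ := ht
    exact ⟨fun h => ⟨(h i hi).1, fun j hj => (h j hj).2⟩, fun h j hj => ⟨h.1, h.2 j hj⟩⟩
  rw [hunion, inclusion_exclusion_card_biUnion]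
  simp only [hinter]
  exact sum_coe_sort _ fun t => (-1 : ℤ) ^ (#t + 1) * #(P.filter fun a => ∀ i ∈ t, q i a)

theorem sum_powerset_nonempty_eq_sum_Icc_of_card_gt {ι M : Type*} [AddCommMonoid M]
    {s : Finset ι} {g : Finset ι → M} {d : ℕ} (hg : ∀ t ⊆ s, d < #t → g t = 0) :
    ∑ t ∈ s.powerset with t.Nonempty, g t = ∑ r ∈ Icc 1 d, ∑ t ∈ powersetCard r s, g t := by
  simp_rw [powersetCard_eq_filter, sum_fiberwise_eq_sum_filter]
  refine (sum_subset (fun t => ?_) fun t ht hnot => ?_).symm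
  · simp only [mem_filter, mem_Icc, one_le_card]
    tauto
  · simp only [mem_filter, mem_powerset, mem_Icc, one_le_card] at ht hnot
    exact hg t ht.1 (lt_of_not_ge fun h => hnot ⟨ht.1, ht.2, h⟩)

end Finset

namespace Polynomial

variable {R : Type*} [CommRing R]

theorem card_le_natDegree_of_forall_eval_eq_zero [IsDomain R] {p : R[X]} (hp : p ≠ 0)
    {X : Finset R} (h : ∀ x ∈ X, p.eval x = 0) : #X ≤ p.natDegree :=
  card_le_degree_of_subset_roots fun x hx => (mem_roots hp).2 (h x hx)

variable [Fintype R] [DecidableEq R]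

theorem card_image_eval_eq_card_exists_eval_add_C_eq_zero (f : R[X]) :
    #(univ.image f.eval) = #{a | ∃ x, (f + C a).eval x = 0} := by
  have : ({a | ∃ x, (f + C a).eval x = 0} : Finset R) = (univ.image f.eval).image Neg.neg := by
    ext a
    simp only [mem_filter, mem_univ, true_and, mem_image, eval_add, eval_C,
      add_eq_zero_iff_neg_eq, exists_exists_eq_and]
  rw [this, card_image_of_injective _ neg_injective]

theorem sum_card_image_eval_eq_card_filter (A : Finset R[X]) :
    ∑ f ∈ A, #(univ.image f.eval) =
      #((A ×ˢ univ).filter fun p => ∃ x, (p.1 + C p.2).eval x = 0) := by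
  simp only [card_image_eval_eq_card_exists_eval_add_C_eq_zero, card_filter, sum_product]

/-- The set `S_X^A` of the paper, with the polynomial `f + a₀` recorded as the pair `(f, a₀)`. -/
noncomputable def shiftsVanishingOn (A : Finset R[X]) (X : Finset R) : Finset (R[X] × R) :=
  (A ×ˢ univ).filter fun p => ∀ x ∈ X, (p.1 + C p.2).eval x = 0

theorem shiftsVanishingOn_eq_empty [IsDomain R] {A : Finset R[X]} {d : ℕ} (hd : 0 < d)
    (hA : ∀ f ∈ A, f.natDegree = d) {X : Finset R} (hX : d < #X) :
    shiftsVanishingOn A X = ∅ := by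
  refine filter_eq_empty_iff.2 fun p hp hroot => hX.not_ge ?_
  have hdeg : (p.1 + C p.2).natDegree = d := by
    rw [natDegree_add_C, hA p.1 (mem_product.1 hp).1]
  exact hdeg ▸ card_le_natDegree_of_forall_eval_eq_zero (ne_zero_of_natDegree_gt (hdeg ▸ hd)) hroot

end Polynomial

theorem avg_value_set_inclusion_exclusion_general
    {F : Type*} [Field F] [Fintype F] [DecidableEq F]
    (d : ℕ) (hd : 0 < d)
    (A : Finset (Polynomial F))
    (hmon : ∀ f ∈ A, f.Monic ∧ f.natDegree = d) :
    (1 / (A.card : ℝ)) *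
        ∑ f ∈ A, ((Finset.image (fun c : F => f.eval c) Finset.univ).card : ℝ)
      = (1 / (A.card : ℝ)) * ∑ r ∈ Finset.Icc 1 d, (-1 : ℝ) ^ (r - 1) *
          ∑ X ∈ Finset.powersetCard r (Finset.univ : Finset F),
            (((A ×ˢ (Finset.univ : Finset F)).filter
                (fun p => ∀ x ∈ X, (p.1 + Polynomial.C p.2).eval x = 0)).card : ℝ) := by
  congr 1
  calc ∑ f ∈ A, (#(univ.image f.eval) : ℝ)
      = #((A ×ˢ univ).filter fun p => ∃ x ∈ univ, (p.1 + C p.2).eval x = 0) := by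
        simp only [mem_univ, true_and]
        exact_mod_cast sum_card_image_eval_eq_card_filter A
    _ = ∑ X ∈ univ.powerset with X.Nonempty, (-1 : ℝ) ^ (#X + 1) * #(shiftsVanishingOn A X) := by
        exact_mod_cast card_filter_exists_eq_sum_powerset (A ×ˢ univ) univ
          (fun x p => (p.1 + C p.2).eval x = 0)
    _ = ∑ r ∈ Icc 1 d, ∑ X ∈ powersetCard r univ,
          (-1 : ℝ) ^ (#X + 1) * #(shiftsVanishingOn A X) :=
        sum_powerset_nonempty_eq_sum_Icc_of_card_gt fun X _ hX => by
          simp [shiftsVanishingOn_eq_empty hd (fun f hf => (hmon f hf).2) hX]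
    _ = _ := by
        refine sum_congr rfl fun r hr => ?_
        obtain ⟨k, rfl⟩ := Nat.exists_eq_add_of_le' (mem_Icc.1 hr).1
        rw [mul_sum]
        refine sum_congr rfl fun X hX => ?_
        rw [(mem_powersetCard.1 hX).2, Nat.add_sub_cancel, pow_succ, pow_succ, mul_neg_one,
          mul_neg_one, neg_neg]
        rfl

/-- inclusion–exclusion formula for the average value set of a family
of monic polynomials of degree `d` over a finite field. -/
theorem avg_value_set_inclusion_exclusion
    {F : Type*} [Field F] [Fintype F] [DecidableEq F]
    (d : ℕ) (hd : 0 < d) (hq : d < Fintype.card F)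
    (A : Finset (Polynomial F)) (hA : A.Nonempty)
    (hmon : ∀ f ∈ A, f.Monic ∧ f.natDegree = d) :
    (1 / (A.card : ℝ)) *
        ∑ f ∈ A, ((Finset.image (fun c : F => f.eval c) Finset.univ).card : ℝ)
      = (1 / (A.card : ℝ)) * ∑ r ∈ Finset.Icc 1 d, (-1 : ℝ) ^ (r - 1) *
          ∑ X ∈ Finset.powersetCard r (Finset.univ : Finset F),
            (((A ×ˢ (Finset.univ : Finset F)).filter
                (fun p => ∀ x ∈ X, (p.1 + Polynomial.C p.2).eval x = 0)).card : ℝ) :=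
  avg_value_set_inclusion_exclusion_general d hd A hmon
end

section
/- Let K be a field and j ≥ 1 an integer. In the polynomial ring K[T_1, T_2], the following identity holds: the partial derivative with respect to T_2 of the polynomial (T_2^j - T_1^j)/(T_2 - T_1) (which is sum over k from 0 to j-1 of T_1^k T_2^{j-1-k}) equals sum over k from 2 to j of binomial(j, k) * T_2^{j-k} * (T_1 - T_2)^{k-2}. -/
/-!
Put `d = T₁ - T₂` and let `Q` be the geometric sum, so that `Q * d = T₁ ^ j - T₂ ^ j`.
Differentiating in `T₂` gives `Q' * d = Q - j T₂ ^ (j - 1)`, hence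
`Q' * d ^ 2 = T₁ ^ j - T₂ ^ j - j T₂ ^ (j - 1) d`, and the binomial expansion of
`T₁ ^ j = (T₂ + d) ^ j` shows that this is `d ^ 2` times the right-hand side.
As `d ^ 2 = (T₂ - T₁) ^ 2` is monic, it is a non-zero-divisor and can be cancelled.
-/

open Finset Polynomial

theorem add_pow_eq_add_add_sq_mul_sum {R : Type*} [CommRing R] (x d : R) (j : ℕ) :
    (x + d) ^ j = x ^ j + j * x ^ (j - 1) * d
      + d ^ 2 * ∑ k ∈ Icc 2 j, (j.choose k : R) * x ^ (j - k) * d ^ (k - 2) := by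
  have hshift : d ^ 2 * ∑ k ∈ Icc 2 j, (j.choose k : R) * x ^ (j - k) * d ^ (k - 2)
      = ∑ k ∈ Icc 2 j, d ^ k * x ^ (j - k) * j.choose k := by
    rw [mul_sum]
    refine sum_congr rfl fun k hk => ?_
    rw [← pow_sub_mul_pow d (mem_Icc.1 hk).1]
    ring
  rcases j with _ | n
  · simp
  rw [hshift, add_comm x, add_pow, sum_range_succ', sum_range_succ', ← Ico_add_one_right_eq_Icc,
    sum_Ico_eq_sum_range]
  simp only [Nat.reduceSubDiff, zero_add, pow_one, add_tsub_cancel_right, Nat.choose_one_right,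
    Nat.cast_add, Nat.cast_one, pow_zero, tsub_zero, one_mul, Nat.choose_zero_right, mul_one,
    add_comm (2 : ℕ)]
  ring

theorem derivative_geom_sum₂_C_X {R : Type*} [CommRing R] (a : R) (j : ℕ) :
    derivative (∑ k ∈ range j, C a ^ k * X ^ (j - 1 - k))
      = ∑ k ∈ Icc 2 j, (j.choose k : R[X]) * X ^ (j - k) * (C a - X) ^ (k - 2) := by
  set Q : R[X] := ∑ k ∈ range j, C a ^ k * X ^ (j - 1 - k)
  set d : R[X] := C a - X
  have hQd : Q * d = C a ^ j - X ^ j := geom_sum₂_mul _ _ j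
  have hderiv : derivative Q * d = Q - (j : R[X]) * X ^ (j - 1) := by
    have h := congrArg derivative hQd
    simp only [d, derivative_mul, derivative_sub, derivative_C, derivative_X, derivative_pow,
      C_eq_natCast] at h
    linear_combination h
  have hd2 : IsRegular (d ^ 2) := by
    rw [show d ^ 2 = (X - C a) ^ 2 by ring]
    exact ((monic_X_sub_C a).pow 2).isRegular
  refine hd2.right.eq_iff.1 ?_
  calc derivative Q * d ^ 2 = d * (Q - (j : R[X]) * X ^ (j - 1)) := by rw [← hderiv]; ring
    _ = C a ^ j - X ^ j - (j : R[X]) * X ^ (j - 1) * d := by linear_combination hQd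
    _ = _ := by
      rw [show C a = X + d by ring, add_pow_eq_add_add_sq_mul_sum]
      ring

theorem deriv_geom_sum_identity_general {K : Type*} [Field K] (j : ℕ) :
    Polynomial.derivative
        (∑ k ∈ Finset.range j,
          (Polynomial.C (Polynomial.X : Polynomial K)) ^ k * Polynomial.X ^ (j - 1 - k))
      = ∑ k ∈ Finset.Icc 2 j,
          ((j.choose k : ℕ) : Polynomial (Polynomial K)) * Polynomial.X ^ (j - k) *
            (Polynomial.C (Polynomial.X : Polynomial K) - Polynomial.X) ^ (k - 2) :=
  derivative_geom_sum₂_C_X X j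

/-- in `K[T_1][T_2]`, the `T_2`-derivative of
`(T_2^j - T_1^j)/(T_2 - T_1) = Σ_{k=0}^{j-1} T_1^k T_2^{j-1-k}` equals
`Σ_{k=2}^j C(j,k) T_2^{j-k} (T_1 - T_2)^{k-2}`. -/
theorem deriv_geom_sum_identity {K : Type*} [Field K] (j : ℕ) (hj : 1 ≤ j) :
    Polynomial.derivative
        (∑ k ∈ Finset.range j,
          (Polynomial.C (Polynomial.X : Polynomial K)) ^ k * Polynomial.X ^ (j - 1 - k))
      = ∑ k ∈ Finset.Icc 2 j,
          ((j.choose k : ℕ) : Polynomial (Polynomial K)) * Polynomial.X ^ (j - k) *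
            (Polynomial.C (Polynomial.X : Polynomial K) - Polynomial.X) ^ (k - 2) :=
  deriv_geom_sum_identity_general j
end

section
/- For every integer d ≥ 2, sum over k from 0 to d-1 of binomial(d, k)^2 * (d - k)! ≤ (5/2) * e^{109/30} * d^{d+1} * e^{2*sqrt(d)} / (sqrt(2*pi) * e^d). -/
/-!
Since `C(d,k)² (d-k)! k!² = d! · d!/(d-k)! ≤ d! dᵏ`, the sum is at most
`d! Σ (√dᵏ/k!)² ≤ d! (Σ √dᵏ/k!)² ≤ d! e^{2√d}`. The Stirling sequence `n!/(√(2n) (n/e)ⁿ)` is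
antitone, so its first value `e/√2` gives `d! ≤ e √d (d/e)ᵈ`; the remaining comparison of
constants, `e √d √(2π) ≤ (5/2) e^{109/30} d`, has ample room.
-/

open Finset Real Nat

theorem Nat.choose_sq_mul_factorial_mul_factorial_sq_le (n k : ℕ) :
    n.choose k ^ 2 * (n - k)! * k ! ^ 2 ≤ n ! * n ^ k := by
  rcases le_or_gt k n with hk | hk
  · calc n.choose k ^ 2 * (n - k)! * k ! ^ 2
        = (n.choose k * k ! * (n - k)!) * (k ! * n.choose k) := by ring
      _ = n ! * n.descFactorial k := by
        rw [choose_mul_factorial_mul_factorial hk, descFactorial_eq_factorial_mul_choose]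
      _ ≤ n ! * n ^ k := Nat.mul_le_mul_left _ (descFactorial_le_pow n k)
  · simp [choose_eq_zero_of_lt hk]

theorem Real.sum_sq_pow_div_factorial_le_exp {x : ℝ} (hx : 0 ≤ x) (n : ℕ) :
    ∑ k ∈ range n, (x ^ k / k !) ^ 2 ≤ exp (2 * x) :=
  calc ∑ k ∈ range n, (x ^ k / k !) ^ 2
      ≤ (∑ k ∈ range n, x ^ k / k !) ^ 2 := sum_sq_le_sq_sum_of_nonneg fun _ _ ↦ by positivity
    _ ≤ exp x ^ 2 :=
      pow_le_pow_left₀ (sum_nonneg fun _ _ ↦ by positivity) (sum_le_exp_of_nonneg hx n) 2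
    _ = exp (2 * x) := by rw [← exp_nat_mul]; norm_num

theorem sum_choose_sq_mul_factorial_le (d n : ℕ) :
    ∑ k ∈ range n, (d.choose k ^ 2 * (d - k)! : ℝ) ≤ d ! * exp (2 * √d) :=
  calc ∑ k ∈ range n, (d.choose k ^ 2 * (d - k)! : ℝ)
      ≤ ∑ k ∈ range n, (d ! : ℝ) * (√d ^ k / k !) ^ 2 := by
        refine sum_le_sum fun k _ ↦ ?_
        rw [div_pow, ← pow_mul, mul_comm k, pow_mul, sq_sqrt d.cast_nonneg, mul_div_assoc',
          le_div_iff₀ (by positivity)]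
        exact_mod_cast choose_sq_mul_factorial_mul_factorial_sq_le d k
    _ ≤ d ! * exp (2 * √d) := by
        rw [← mul_sum]
        gcongr
        exact sum_sq_pow_div_factorial_le_exp (sqrt_nonneg _) n

theorem Stirling.factorial_le_exp_one_mul_sqrt_mul {n : ℕ} (hn : n ≠ 0) :
    (n ! : ℝ) ≤ exp 1 * √n * (n / exp 1) ^ n := by
  obtain ⟨m, rfl⟩ := exists_eq_succ_of_ne_zero hn
  have h : stirlingSeq (m + 1) ≤ stirlingSeq 1 := stirlingSeq'_antitone (Nat.zero_le m)
  rw [stirlingSeq_one, stirlingSeq, div_le_div_iff₀ (by positivity) (by positivity),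
    sqrt_mul zero_le_two] at h
  calc ((m + 1)! : ℝ) = (m + 1)! * √2 / √2 := by field_simp
    _ ≤ exp 1 * (√2 * √(m + 1 : ℕ) * ((m + 1 : ℕ) / exp 1) ^ (m + 1)) / √2 := by gcongr
    _ = _ := by field_simp

theorem exp_one_mul_sqrt_two_pi_le : exp 1 * √(2 * π) ≤ 5 / 2 * exp (109 / 30) := by
  have hsqrt : √(2 * π) ≤ 3 := sqrt_le_iff.2 ⟨by norm_num, by nlinarith [pi_lt_d2]⟩
  have he3 : exp 1 ≤ 3 := exp_one_lt_d9.le.trans (by norm_num)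
  have h4 : 4 ≤ exp (109 / 30) := by linarith [add_one_le_exp (109 / 30 : ℝ)]
  nlinarith [sqrt_nonneg (2 * π), exp_pos 1]

theorem sum_choose_sq_factorial_bound_general (d : ℕ) :
    (∑ k ∈ Finset.range d, ((d.choose k) ^ 2 * (d - k).factorial : ℝ))
      ≤ (5 / 2) * Real.exp (109 / 30) * (d : ℝ) ^ (d + 1) *
          Real.exp (2 * Real.sqrt d) / (Real.sqrt (2 * Real.pi) * Real.exp d) := by
  rcases eq_or_ne d 0 with rfl | hd
  · simp
  have hsqrt_le : √d ≤ d := sqrt_le_self_iff.2 (.inr (one_le_cast.2 (one_le_iff_ne_zero.2 hd)))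
  have hconst : exp 1 * √d * √(2 * π) ≤ 5 / 2 * exp (109 / 30) * d := by
    calc exp 1 * √d * √(2 * π) = exp 1 * √(2 * π) * √d := by ring
      _ ≤ 5 / 2 * exp (109 / 30) * d :=
        mul_le_mul exp_one_mul_sqrt_two_pi_le hsqrt_le (sqrt_nonneg _) (by positivity)
  calc (∑ k ∈ range d, (d.choose k ^ 2 * (d - k)! : ℝ))
      ≤ d ! * exp (2 * √d) := sum_choose_sq_mul_factorial_le d d
    _ ≤ exp 1 * √d * (d / exp 1) ^ d * exp (2 * √d) := by
        gcongr; exact Stirling.factorial_le_exp_one_mul_sqrt_mul hd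
    _ = exp 1 * √d * √(2 * π) * (d ^ d * exp (2 * √d) / (√(2 * π) * exp d)) := by
        rw [div_pow, ← exp_nat_mul, mul_one]
        field_simp
    _ ≤ 5 / 2 * exp (109 / 30) * d * (d ^ d * exp (2 * √d) / (√(2 * π) * exp d)) := by
        gcongr
    _ = _ := by ring

/-- `Σ_{k=0}^{d-1} C(d,k)² (d-k)! ≤ (5/2) e^{109/30} d^{d+1} e^{2√d} / (√(2π) e^d)`. -/
theorem sum_choose_sq_factorial_bound (d : ℕ) (hd : 2 ≤ d) :
    (∑ k ∈ Finset.range d, ((d.choose k) ^ 2 * (d - k).factorial : ℝ))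
      ≤ (5 / 2) * Real.exp (109 / 30) * (d : ℝ) ^ (d + 1) *
          Real.exp (2 * Real.sqrt d) / (Real.sqrt (2 * Real.pi) * Real.exp d) :=
  sum_choose_sq_factorial_bound_general d
end
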